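/- The directed graph whose vertex set is the set 𝔠_N of acceptable conformations, with an arc from C to C' whenever there exists k ∈ ⟦−N,N⟧ with C' = f_k(C) and C' satisfies the SAW requirement, is strongly connected: for all C, C' ∈ 𝔠_N there is a finite sequence of such single-fold arcs leading from C to C' with every intermediate conformation in 𝔠_N. -/
import Mathlib


open scoped BigOperators

namespace HP

/-- A conformation of `N+1` residues in absolute encoding
(the initial residue, always `0`, is omitted): `C k` is the paper's `C_{k+1}`. -/
abbrev Conf (N : ℕ) := Fin N → ZMod 4

open Classical in
/-- `δ(a,b) = 0` if `a = b`, `1` otherwise. -/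
noncomputable def delta {α : Type*} (a b : α) : ℝ := if a = b then 0 else 1

/-- `d_C(C,Č) = Σ_{k=1}^N δ(C_k,Č_k)·2^{N−k}`. -/
noncomputable def dC (N : ℕ) (C C' : Conf N) : ℝ :=
  ∑ k : Fin N, delta (C k) (C' k) * (2 : ℝ) ^ (N - 1 - (k : ℕ))

/-- `d_F(F,F̌) = (9/(2N))·Σ_{k=0}^∞ |F^k − F̌^k|/10^{k+1}`. -/
noncomputable def dF (N : ℕ) (F F' : ℕ → ℤ) : ℝ :=
  (9 / (2 * (N : ℝ))) * ∑' k : ℕ, |((F k : ℝ)) - ((F' k : ℝ))| / 10 ^ (k + 1)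

/-- `d((C,F),(Č,F̌)) = d_C(C,Č) + d_F(F,F̌)`. -/
noncomputable def distX (N : ℕ) (X Y : Conf N × (ℕ → ℤ)) : ℝ :=
  dC N X.1 Y.1 + dF N X.2 Y.2

/-- A folding sequence takes values in `⟦−N,N⟧`. -/
def validSeq (N : ℕ) (F : ℕ → ℤ) : Prop := ∀ k, |F k| ≤ (N : ℤ)

/-- The fold map `f_k`: residues with (paper) index `≥ |k|` are rotated by
`f^{sign k}` where `f x = x + 1` (in `ℤ/4ℤ`); `f_0 = id`. -/
def foldMap (N : ℕ) (k : ℤ) (C : Conf N) : Conf N :=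
  fun j => if ((j : ℕ) : ℤ) + 1 < |k| then C j else C j + (Int.sign k : ZMod 4)

/-- The folding dynamics `G(C,F) = (f_{i(F)}(C), σ(F))`. -/
def G (N : ℕ) : Conf N × (ℕ → ℤ) → Conf N × (ℕ → ℤ) :=
  fun X => (foldMap N (X.2 0) X.1, fun n => X.2 (n + 1))

/-- The shift `σ` on folding sequences. -/
def shiftF (F : ℕ → ℤ) : ℕ → ℤ := fun k => F (k + 1)

/-- Unit move in the 2D lattice associated with an absolute encoding letter. -/
def step (c : ZMod 4) : ℤ × ℤ :=
  if c = 0 then (1, 0) else if c = 1 then (0, -1) else if c = 2 then (-1, 0) else (0, 1)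

/-- `pos N C i` is the lattice point `X_i` of the 2D representation `p(C)`. -/
def pos (N : ℕ) (C : Conf N) : ℕ → ℤ × ℤ
  | 0 => (0, 0)
  | i + 1 => pos N C i + (if h : i < N then step (C ⟨i, h⟩) else 0)

/-- The SAW requirement: the lattice points `X_0, …, X_N` are pairwise distinct. -/
def SAW (N : ℕ) (C : Conf N) : Prop :=
  ∀ i j : ℕ, i ≤ N → j ≤ N → pos N C i = pos N C j → i = j

/-- Successive application of fold maps `f_{k_1}, …, f_{k_n}`. -/
def folds (N : ℕ) : Conf N → List ℤ → Conf N
  | C, [] => C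
  | C, k :: t => folds N (foldMap N k C) t

/-- The set `𝔠_N` of acceptable conformations: obtained from `(0,…,0)` by a
nonempty sequence of folds in `⟦−N,N⟧`, all intermediate conformations
(including the initial and final ones) satisfying the SAW requirement. -/
def acceptable (N : ℕ) (C : Conf N) : Prop :=
  ∃ L : List ℤ, L ≠ [] ∧ (∀ k ∈ L, |k| ≤ (N : ℤ)) ∧
    folds N (fun _ => 0) L = C ∧
    ∀ p : List ℤ, p <+: L → SAW N (folds N (fun _ => 0) p)

/-- Membership in the phase space `X = 𝔠_N × ⟦−N,N⟧^ℕ`. -/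
def inX (N : ℕ) (X : Conf N × (ℕ → ℤ)) : Prop :=
  acceptable N X.1 ∧ validSeq N X.2

/-- `U` is open in the metric space `(X, d)` (relative topology on `𝔠_N × ⟦−N,N⟧^ℕ`). -/
def openIn (N : ℕ) (U : Set (Conf N × (ℕ → ℤ))) : Prop :=
  ∀ x ∈ U, ∃ ε > (0 : ℝ), ∀ y, inX N y → distX N x y < ε → y ∈ U

/-- `A` is closed in the metric space `(X, d)` (relative topology). -/
def closedIn (N : ℕ) (A : Set (Conf N × (ℕ → ℤ))) : Prop :=
  ∀ x, inX N x → x ∉ A → ∃ ε > (0 : ℝ), ∀ y, inX N y → distX N x y < ε → y ∉ A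

/-- Arc of the folding graph on `𝔠_N`: from `C` to `C'` whenever `C' = f_k(C)`
for some `k ∈ ⟦−N,N⟧` and `C'` satisfies the SAW requirement. -/
def foldArc (N : ℕ) (C C' : Conf N) : Prop :=
  ∃ k : ℤ, |k| ≤ (N : ℤ) ∧ C' = foldMap N k C ∧ SAW N C'

lemma foldMap_zero (N : ℕ) (C : Conf N) : foldMap N 0 C = C := by
  funext j
  simp [foldMap]

lemma foldMap_neg (N : ℕ) (k : ℤ) (C : Conf N) :
    foldMap N (-k) (foldMap N k C) = C := by
  funext j
  simp only [foldMap, abs_neg]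
  split
  · rfl
  · simp [Int.sign_neg]

lemma folds_append (N : ℕ) (C : Conf N) (l1 l2 : List ℤ) :
    folds N C (l1 ++ l2) = folds N (folds N C l1) l2 := by
  induction l1 generalizing C with
  | nil => rfl
  | cons k t ih => simp [folds, ih]

lemma pos_zero_conf (N : ℕ) (i : ℕ) (hi : i ≤ N) :
    pos N (fun _ => (0 : ZMod 4)) i = ((i : ℤ), 0) := by
  induction i with
  | zero => rfl
  | succ n ih =>
      have hn : n < N := lt_of_lt_of_le (Nat.lt_succ_self n) hi
      have := ih (le_of_lt hn)
      simp [pos, hn, this, step, Prod.ext_iff]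

lemma SAW_zero (N : ℕ) : SAW N (fun _ => (0 : ZMod 4)) := by
  intro i j hi hj h
  rw [pos_zero_conf N i hi, pos_zero_conf N j hj] at h
  simp only [Prod.mk.injEq] at h
  exact_mod_cast h.1

lemma acceptable_zero (N : ℕ) : acceptable N (fun _ => (0 : ZMod 4)) := by
  refine ⟨[0], by simp, by simp, ?_, ?_⟩
  · simp [folds, foldMap_zero]
  · intro p hp
    rcases List.prefix_cons_iff.mp hp with h | ⟨t, hpt, ht⟩
    · rw [h]; exact SAW_zero N
    · rw [hpt, List.prefix_nil.mp ht]
      simpa [folds, foldMap_zero] using SAW_zero N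

/-- Main inductive lemma: any conformation obtained from zero by an acceptable
fold list is acceptable and is connected to zero in both directions. -/
lemma reach_zero (N : ℕ) (L : List ℤ) (hL : L ≠ [])
    (hb : ∀ k ∈ L, |k| ≤ (N : ℤ))
    (hs : ∀ p : List ℤ, p <+: L → SAW N (folds N (fun _ => 0) p)) :
    acceptable N (folds N (fun _ => 0) L) ∧
    Relation.ReflTransGen (fun a b => foldArc N a b ∧ acceptable N b)
      (fun _ => (0 : ZMod 4)) (folds N (fun _ => 0) L) ∧
    Relation.ReflTransGen (fun a b => foldArc N a b ∧ acceptable N b)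
      (folds N (fun _ => 0) L) (fun _ => (0 : ZMod 4)) := by
  induction L using List.reverseRecOn with
  | nil => exact absurd rfl hL
  | append_singleton M k ih =>
    have hacc : acceptable N (folds N (fun _ => 0) (M ++ [k])) :=
      ⟨M ++ [k], by simp, hb, rfl, hs⟩
    have hbk : |k| ≤ (N : ℤ) := hb k (by simp)
    have hsawL : SAW N (folds N (fun _ => 0) (M ++ [k])) := hs _ List.prefix_rfl
    have heq : folds N (fun _ => 0) (M ++ [k]) =
        foldMap N k (folds N (fun _ => 0) M) := by
      rw [folds_append]; rfl
    by_cases hM : M = []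
    · subst hM
      refine ⟨hacc, ?_, ?_⟩
      · exact Relation.ReflTransGen.single ⟨⟨k, hbk, heq, hsawL⟩, hacc⟩
      · refine Relation.ReflTransGen.single ⟨⟨-k, by simpa using hbk, ?_, SAW_zero N⟩,
          acceptable_zero N⟩
        rw [heq, foldMap_neg]; rfl
    · have hbM : ∀ j ∈ M, |j| ≤ (N : ℤ) := fun j hj => hb j (by simp [hj])
      have hsM : ∀ p : List ℤ, p <+: M → SAW N (folds N (fun _ => 0) p) :=
        fun p hp => hs p (hp.trans (List.prefix_append M [k]))
      obtain ⟨haccM, hfwd, hbwd⟩ := ih hM hbM hsM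
      have hsawM : SAW N (folds N (fun _ => 0) M) := hs M (List.prefix_append M [k])
      refine ⟨hacc, ?_, ?_⟩
      · exact hfwd.tail ⟨⟨k, hbk, heq, hsawL⟩, hacc⟩
      · refine Relation.ReflTransGen.head ⟨⟨-k, by simpa using hbk, ?_, hsawM⟩, haccM⟩ hbwd
        rw [heq, foldMap_neg]

/-- the directed graph on the acceptable conformations `𝔠_N`,
with single-fold arcs, is strongly connected: any `C' ∈ 𝔠_N` is reachable from
any `C ∈ 𝔠_N` by a finite sequence of arcs whose intermediate conformations
all belong to `𝔠_N`. -/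
theorem fold_graph_strongly_connected (N : ℕ) (hN : 1 ≤ N) :
    ∀ C C' : Conf N, acceptable N C → acceptable N C' →
      Relation.ReflTransGen (fun a b => foldArc N a b ∧ acceptable N b) C C' := by
  intro C C' hC hC'
  obtain ⟨L, hL, hb, hfold, hs⟩ := hC
  obtain ⟨L', hL', hb', hfold', hs'⟩ := hC'
  have h1 := reach_zero N L hL hb hs
  have h2 := reach_zero N L' hL' hb' hs'
  rw [hfold] at h1
  rw [hfold'] at h2
  exact h1.2.2.trans h2.2.1

end HP
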